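/- arXiv:1206.0606 — 12 statements merged into one kernel-verified Lean document; each statement's English description precedes it below -/
import Mathlib

section
/- An odd composite number n is an overpseudoprime to base 2 if and only if the multiplicative order of 2 modulo d is the same for every divisor d > 1 of n. -/
/-- Multiplicative order of `b` modulo `n`. -/
noncomputable def ordn (b n : ℕ) : ℕ := orderOf (b : ZMod n)

/-- `n` is an overpseudoprime to base `b`: composite, coprime to `b`, and the
multiplicative order of `b` mod `d` is the same for all divisors `d > 1` of `n`. -/
def Overpsp (b n : ℕ) : Prop :=
  1 < n ∧ ¬ n.Prime ∧ Nat.Coprime b n ∧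
    ∀ d, d ∣ n → 1 < d → ordn b d = ordn b n

/-- `n` is primover to base `b`: prime or overpseudoprime to base `b`. -/
def Primover (b n : ℕ) : Prop := n.Prime ∨ Overpsp b n

/-- The cyclotomic coset of `2` modulo `n` containing `s`. -/
def coset (n s : ℕ) : Finset ℕ := (Finset.range n).image (fun k => 2 ^ k * s % n)

/-- The number of distinct cyclotomic cosets of `2` modulo `n`. -/
def numCosets (n : ℕ) : ℕ := ((Finset.Ioo 0 n).image (coset n)).card

/-- `Φ_N(b)` as a natural number. -/
noncomputable def PhiN (N b : ℕ) : ℕ := ((Polynomial.cyclotomic N ℤ).eval (b : ℤ)).toNat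

/-!
Multiplication by `2` permutes the nonzero residues modulo `n`, and its orbits are the cyclotomic
cosets. The orbit of `s` has exactly `ord_d(2)` elements, where `d = n / gcd(n, s)`; this divides
`ord_n(2)`, and every divisor `d > 1` of `n` occurs (take `s = n / d`). As the orbits partition
`{1, …, n - 1}`, we get `n - 1 ≤ r(n) · ord_n(2)`, with equality iff every orbit has the full size
`ord_n(2)`, i.e. iff `ord_d(2) = ord_n(2)` for every divisor `d > 1` of `n`.
-/

open Finset

lemma modEq_mul_right_iff_div_gcd {n s x y : ℕ} (hn : 0 < n) :
    x * s ≡ y * s [MOD n] ↔ x ≡ y [MOD n / n.gcd s] := by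
  refine ⟨Nat.ModEq.cancel_right_div_gcd hn, fun h => ?_⟩
  refine (h.mul_right' s).of_dvd ?_
  have h' := mul_dvd_mul_left (n / n.gcd s) (n.gcd_dvd_right s)
  rwa [Nat.div_mul_cancel (n.gcd_dvd_left s)] at h'

lemma pow_modEq_pow_iff_modEq_ordn {a d k j : ℕ} (ha : a.Coprime d) :
    a ^ k ≡ a ^ j [MOD d] ↔ k ≡ j [MOD ordn a d] := by
  obtain ⟨u, hu⟩ := (ZMod.isUnit_iff_coprime a d).mpr ha
  rw [← ZMod.natCast_eq_natCast_iff, ordn, ← hu, orderOf_units, ← pow_eq_pow_iff_modEq,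
    Units.ext_iff]
  push_cast
  rw [hu]

lemma ordn_pos {a d : ℕ} (ha : a.Coprime d) : 0 < ordn a d := by
  obtain ⟨u, hu⟩ := (ZMod.isUnit_iff_coprime a d).mpr ha
  rw [ordn, ← hu, orderOf_units]
  exact orderOf_pos u

lemma ordn_le {a d : ℕ} (hd : 0 < d) : ordn a d ≤ d := by
  have : NeZero d := ⟨hd.ne'⟩
  simpa [ordn, ZMod.card] using orderOf_le_card_univ (x := (a : ZMod d))

lemma ordn_dvd_ordn {a d n : ℕ} (h : d ∣ n) : ordn a d ∣ ordn a n := by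
  rw [ordn, ordn, ← map_natCast (ZMod.castHom h (ZMod d)) a]
  exact orderOf_map_dvd (ZMod.castHom h (ZMod d)).toMonoidHom _

lemma pow_mul_modEq_pow_mul_iff {a n s k j : ℕ} (hn : 0 < n) (ha : a.Coprime n) :
    a ^ k * s ≡ a ^ j * s [MOD n] ↔ k ≡ j [MOD ordn a (n / n.gcd s)] := by
  rw [modEq_mul_right_iff_div_gcd hn,
    pow_modEq_pow_iff_modEq_ordn (ha.coprime_dvd_right (Nat.div_dvd_of_dvd (n.gcd_dvd_left s)))]

lemma forall_div_gcd_iff {n : ℕ} (hn : 0 < n) (P : ℕ → Prop) :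
    (∀ s ∈ Ioo 0 n, P (n / n.gcd s)) ↔ ∀ d, d ∣ n → 1 < d → P d := by
  constructor
  · intro h d hd hd1
    have hs : n / d ∈ Ioo 0 n :=
      mem_Ioo.mpr ⟨Nat.div_pos (Nat.le_of_dvd hn hd) (by omega), Nat.div_lt_self hn hd1⟩
    simpa [Nat.gcd_eq_right (Nat.div_dvd_of_dvd hd), Nat.div_div_self hd hn.ne'] using h _ hs
  · intro h s hs
    obtain ⟨hs0, hsn⟩ := mem_Ioo.mp hs
    refine h _ (Nat.div_dvd_of_dvd (n.gcd_dvd_left s)) ?_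
    rw [Nat.lt_div_iff_mul_lt' (n.gcd_dvd_left s), mul_one]
    exact (Nat.le_of_dvd hs0 (n.gcd_dvd_right s)).trans_lt hsn

lemma self_mem_coset {n x : ℕ} (hx : x < n) : x ∈ coset n x :=
  mem_image.mpr ⟨0, mem_range.mpr (by omega), by simp [Nat.mod_eq_of_lt hx]⟩

section Cosets

variable {n : ℕ} (hn : Odd n)
include hn

lemma ordn_two_div_gcd_pos (s : ℕ) : 0 < ordn 2 (n / n.gcd s) :=
  ordn_pos (hn.coprime_two_left.coprime_dvd_right
    (Nat.div_dvd_of_dvd (n.gcd_dvd_left s)))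

lemma two_pow_mul_mod_eq_iff {s k j : ℕ} :
    2 ^ k * s % n = 2 ^ j * s % n ↔ k ≡ j [MOD ordn 2 (n / n.gcd s)] :=
  pow_mul_modEq_pow_mul_iff hn.pos hn.coprime_two_left

lemma coset_eq_image_range (s : ℕ) :
    coset n s = (range (ordn 2 (n / n.gcd s))).image (fun k => 2 ^ k * s % n) := by
  have hle : ordn 2 (n / n.gcd s) ≤ n :=
    (ordn_le (Nat.div_pos (n.gcd_le_left s hn.pos) (n.gcd_pos_of_pos_left s hn.pos))).trans
      (Nat.div_le_self _ _)
  ext y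
  simp only [coset, mem_image, mem_range]
  constructor
  · rintro ⟨k, -, rfl⟩
    exact ⟨k % _, Nat.mod_lt _ (ordn_two_div_gcd_pos hn s),
      (two_pow_mul_mod_eq_iff hn).mpr (Nat.mod_modEq _ _)⟩
  · rintro ⟨k, hk, rfl⟩
    exact ⟨k, hk.trans_le hle, rfl⟩

lemma mem_coset_iff {s y : ℕ} : y ∈ coset n s ↔ ∃ k, 2 ^ k * s % n = y := by
  constructor
  · rw [coset, mem_image]
    rintro ⟨k, -, hk⟩
    exact ⟨k, hk⟩
  · rintro ⟨k, rfl⟩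
    rw [coset_eq_image_range hn]
    exact mem_image.mpr ⟨k % _, mem_range.mpr (Nat.mod_lt _ (ordn_two_div_gcd_pos hn s)),
      (two_pow_mul_mod_eq_iff hn).mpr (Nat.mod_modEq _ _)⟩

lemma card_coset (s : ℕ) : (coset n s).card = ordn 2 (n / n.gcd s) := by
  rw [coset_eq_image_range hn, card_image_of_injOn, card_range]
  intro k hk j hj h
  simpa [Nat.ModEq, Nat.mod_eq_of_lt (mem_range.mp hk), Nat.mod_eq_of_lt (mem_range.mp hj)]
    using (two_pow_mul_mod_eq_iff hn).mp h

lemma card_coset_dvd (s : ℕ) : (coset n s).card ∣ ordn 2 n :=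
  card_coset hn s ▸ ordn_dvd_ordn (Nat.div_dvd_of_dvd (n.gcd_dvd_left s))

lemma coset_eq_of_mem {s x : ℕ} (h : x ∈ coset n s) : coset n x = coset n s := by
  obtain ⟨m, rfl⟩ := (mem_coset_iff hn).mp h
  ext y
  simp only [mem_coset_iff hn, Nat.mul_mod_mod, ← mul_assoc, ← pow_add]
  constructor
  · rintro ⟨k, rfl⟩
    exact ⟨_, rfl⟩
  · rintro ⟨k, rfl⟩
    set e := ordn 2 (n / n.gcd s)
    have hm : m ≤ k + e * m := le_add_left (Nat.le_mul_of_pos_left m (ordn_two_div_gcd_pos hn s))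
    refine ⟨k + e * m - m, (two_pow_mul_mod_eq_iff hn).mpr ?_⟩
    rw [Nat.sub_add_cancel hm]
    exact Nat.add_mul_mod_self_left k e m

lemma mem_Ioo_of_mem_coset {s x : ℕ} (hs : s ∈ Ioo 0 n) (h : x ∈ coset n s) : x ∈ Ioo 0 n := by
  obtain ⟨k, rfl⟩ := (mem_coset_iff hn).mp h
  obtain ⟨hs0, hsn⟩ := mem_Ioo.mp hs
  refine mem_Ioo.mpr ⟨Nat.pos_of_ne_zero fun h0 => ?_, Nat.mod_lt _ hn.pos⟩
  have hdvd : n ∣ s := ((hn.coprime_two_left.pow_left k).symm).dvd_of_dvd_mul_left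
    (Nat.dvd_of_mod_eq_zero h0)
  exact absurd (Nat.le_of_dvd hs0 hdvd) (by omega)

lemma sum_card_cosets : ∑ c ∈ (Ioo 0 n).image (coset n), c.card = n - 1 := by
  have hfiber : ∀ c ∈ (Ioo 0 n).image (coset n), {x ∈ Ioo 0 n | coset n x = c} = c := by
    simp only [mem_image]
    rintro _ ⟨s, hs, rfl⟩
    ext x
    rw [mem_filter]
    exact ⟨fun ⟨hx, hxs⟩ => hxs ▸ self_mem_coset (mem_Ioo.mp hx).2,
      fun h => ⟨mem_Ioo_of_mem_coset hn hs h, coset_eq_of_mem hn h⟩⟩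
  rw [← sum_congr rfl fun c hc => congrArg card (hfiber c hc), ← card_eq_sum_card_image,
    Nat.card_Ioo, Nat.sub_zero]

end Cosets

theorem stmt2_general (n : ℕ) (hodd : Odd n) :
    n = numCosets n * ordn 2 n + 1 ↔ ∀ d, d ∣ n → 1 < d → ordn 2 d = ordn 2 n := by
  set C := (Ioo 0 n).image (coset n)
  have hle : ∀ c ∈ C, c.card ≤ ordn 2 n := by
    simp only [C, forall_mem_image]
    exact fun s _ => Nat.le_of_dvd (ordn_pos hodd.coprime_two_left) (card_coset_dvd hodd s)
  have hnum : numCosets n = C.card := rfl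
  calc n = numCosets n * ordn 2 n + 1 ↔ ∑ c ∈ C, c.card = ∑ _c ∈ C, ordn 2 n := by
        rw [sum_card_cosets hodd, sum_const, smul_eq_mul, hnum]
        have := hodd.pos
        omega
    _ ↔ ∀ c ∈ C, c.card = ordn 2 n := sum_eq_sum_iff_of_le hle
    _ ↔ ∀ s ∈ Ioo 0 n, ordn 2 (n / n.gcd s) = ordn 2 n := by
      simp only [C, forall_mem_image, card_coset hodd]
    _ ↔ _ := forall_div_gcd_iff hodd.pos (fun d => ordn 2 d = ordn 2 n)

theorem stmt2 (n : ℕ) (hn : 1 < n) (hodd : Odd n) (hc : ¬ n.Prime) :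
    n = numCosets n * ordn 2 n + 1 ↔ ∀ d, d ∣ n → 1 < d → ordn 2 d = ordn 2 n :=
  stmt2_general n hodd
end

section
/- For every prime p, the Mersenne number M_p = 2^p − 1 is either prime or an overpseudoprime to base 2. -/
lemma ord_eq_p (p : ℕ) (hp : p.Prime) (d : ℕ) (hd : d ∣ 2 ^ p - 1) (hd1 : 1 < d) :
    ordn 2 d = p := by
  have h2p : 1 ≤ 2 ^ p := Nat.one_le_two_pow
  have h0 : ((2 ^ p - 1 : ℕ) : ZMod d) = 0 := (ZMod.natCast_eq_zero_iff _ _).mpr hd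
  have h1 : (2 : ZMod d) ^ p = 1 := by
    have := h0
    rw [Nat.cast_sub h2p] at this
    push_cast at this
    linear_combination this
  have hdvd : orderOf (2 : ZMod d) ∣ p := orderOf_dvd_of_pow_eq_one h1
  rcases (Nat.Prime.eq_one_or_self_of_dvd hp _ hdvd) with h | h
  · exfalso
    have h21 : (2 : ZMod d) = 1 := orderOf_eq_one_iff.mp h
    have : ((2 : ℕ) : ZMod d) = ((1 : ℕ) : ZMod d) := by push_cast; exact h21
    have hmod := (ZMod.natCast_eq_natCast_iff 2 1 d).mp this
    have : d ∣ 1 := (Nat.modEq_iff_dvd' (by norm_num)).mp hmod.symm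
    have := Nat.le_of_dvd one_pos this
    omega
  · exact h

theorem stmt4 (p : ℕ) (hp : p.Prime) :
    (2 ^ p - 1).Prime ∨ Overpsp 2 (2 ^ p - 1) := by
  by_cases h : (2 ^ p - 1).Prime
  · exact Or.inl h
  · right
    have hp2 : 2 ≤ p := hp.two_le
    have hn : 1 < 2 ^ p - 1 := by
      have : 4 ≤ 2 ^ p := by
        calc 4 = 2 ^ 2 := by norm_num
        _ ≤ 2 ^ p := Nat.pow_le_pow_right (by norm_num) hp2
      omega
    refine ⟨hn, h, ?_, ?_⟩
    · have hodd : Odd (2 ^ p - 1) :=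
        Nat.Even.sub_odd Nat.one_le_two_pow
          ((Nat.even_pow' (by omega)).mpr even_two) odd_one
      exact Nat.coprime_two_left.mpr hodd
    · intro d hd hd1
      rw [ord_eq_p p hp d hd hd1, ord_eq_p p hp _ dvd_rfl hn]
end

section
/- Every overpseudoprime to base 2 is a super-Poulet pseudoprime, i.e., every divisor d > 1 of n satisfies 2^{d-1} ≡ 1 (mod d). -/
/-!
Let `r = ord_n(2)`. Every prime `p ∣ n` has `ord_p(2) = r`, and by Fermat `ord_p(2) ∣ p - 1`,
so `p ≡ 1 (mod r)`. Multiplying, every divisor `d` of `n` satisfies `d ≡ 1 (mod r)`, that is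
`ord_d(2) = r ∣ d - 1`, whence `2^(d-1) ≡ 1 (mod d)`.
-/

theorem Nat.modEq_one_of_forall_prime_dvd {r m : ℕ} (hm : m ≠ 0)
    (h : ∀ p, p.Prime → p ∣ m → p ≡ 1 [MOD r]) : m ≡ 1 [MOD r] := by
  induction m using Nat.recOnMul with
  | zero => exact absurd rfl hm
  | one => rfl
  | prime p hp => exact h p hp dvd_rfl
  | mul a b iha ihb =>
    have ha := iha (left_ne_zero_of_mul hm) fun p hp hpa => h p hp (hpa.mul_right b)
    have hb := ihb (right_ne_zero_of_mul hm) fun p hp hpb => h p hp (hpb.mul_left a)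
    simpa using ha.mul hb

theorem orderOf_natCast_dvd_iff_modEq {b d k : ℕ} :
    orderOf (b : ZMod d) ∣ k ↔ b ^ k ≡ 1 [MOD d] := by
  rw [orderOf_dvd_iff_pow_eq_one, ← ZMod.natCast_eq_natCast_iff]
  push_cast
  rfl

theorem ordn_dvd_prime_sub_one {b p : ℕ} (hp : p.Prime) (hb : Nat.Coprime b p) :
    ordn b p ∣ p - 1 := by
  have : Fact p.Prime := ⟨hp⟩
  refine ZMod.orderOf_dvd_card_sub_one ?_
  rw [Ne, ZMod.natCast_eq_zero_iff]
  exact fun hpb => hp.one_lt.ne' (hb.symm.eq_one_of_dvd hpb)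

namespace Overpsp

variable {b n : ℕ}

theorem modEq_one_of_dvd (h : Overpsp b n) {d : ℕ} (hd : d ∣ n) : d ≡ 1 [MOD ordn b n] := by
  obtain ⟨hn, -, hcop, hord⟩ := h
  refine Nat.modEq_one_of_forall_prime_dvd (ne_zero_of_dvd_ne_zero (by omega) hd) ?_
  intro p hp hpd
  have hpn := hpd.trans hd
  have hr : ordn b n ∣ p - 1 :=
    hord p hpn hp.one_lt ▸ ordn_dvd_prime_sub_one hp (hcop.coprime_dvd_right hpn)
  exact ((Nat.modEq_iff_dvd' hp.one_lt.le).mpr hr).symm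

theorem pow_sub_one_modEq_one (h : Overpsp b n) {d : ℕ} (hd : d ∣ n) (hd1 : 1 < d) :
    b ^ (d - 1) ≡ 1 [MOD d] := by
  have hr : ordn b d ∣ d - 1 :=
    h.2.2.2 d hd hd1 ▸ (Nat.modEq_iff_dvd' hd1.le).mp (h.modEq_one_of_dvd hd).symm
  exact orderOf_natCast_dvd_iff_modEq.mp hr

end Overpsp

theorem stmt5 (n : ℕ) (h : Overpsp 2 n) :
    ∀ d, d ∣ n → 1 < d → 2 ^ (d - 1) ≡ 1 [MOD d] :=
  fun _ hd hd1 => h.pow_sub_one_modEq_one hd hd1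
end

section
/- Let p₁, ..., p_k be distinct odd primes with ord_{p_i}(2) = ord_{p_j}(2) for all i, j, and suppose each p_i^{l_i} is an overpseudoprime to base 2 (or l_i = 1). Then n = p₁^{l₁} ⋯ p_k^{l_k} is an overpseudoprime to base 2. -/
/-!
Let `r` be the common order of `2` modulo the primes `pᵢ`. Each factor `pᵢ ^ lᵢ` is prime or
an overpseudoprime, so `2` also has order `r` modulo `pᵢ ^ lᵢ`; the factors being pairwise
coprime, `n ∣ 2 ^ r - 1`, i.e. `ord_n 2 ∣ r`. For a divisor `d > 1` of `n`, pick a prime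
`pᵢ ∣ d`: then `r = ord_{pᵢ} 2 ∣ ord_d 2 ∣ ord_n 2 ∣ r`.
-/

lemma ordn_dvd_ordn_of_dvd {b d e : ℕ} (h : d ∣ e) : ordn b d ∣ ordn b e := by
  simpa [ordn] using orderOf_map_dvd (ZMod.castHom h (ZMod d)).toMonoidHom (b : ZMod e)

lemma ordn_dvd_iff {b m r : ℕ} : ordn b m ∣ r ↔ (m : ℤ) ∣ (b : ℤ) ^ r - 1 := by
  rw [ordn, orderOf_dvd_iff_pow_eq_one, ← ZMod.intCast_zmod_eq_zero_iff_dvd]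
  push_cast
  exact sub_eq_zero.symm

lemma ordn_prod_dvd {ι : Type*} [Fintype ι] {b r : ℕ} {m : ι → ℕ}
    (hm : Pairwise fun i j => (m i).Coprime (m j)) (h : ∀ i, ordn b (m i) ∣ r) :
    ordn b (∏ i, m i) ∣ r := by
  rw [ordn_dvd_iff, Nat.cast_prod]
  exact Fintype.prod_dvd_of_coprime (fun i j hij => Nat.isCoprime_iff_coprime.mpr (hm hij))
    fun i => ordn_dvd_iff.mp (h i)

lemma overpsp_of_ordn_dvd_of_forall_prime {b n r : ℕ} (h1 : 1 < n) (hnp : ¬ n.Prime)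
    (hcop : b.Coprime n) (hn : ordn b n ∣ r)
    (hprime : ∀ q, q.Prime → q ∣ n → ordn b q = r) : Overpsp b n := by
  refine ⟨h1, hnp, hcop, fun d hd hd1 => Nat.dvd_antisymm (ordn_dvd_ordn_of_dvd hd) ?_⟩
  obtain ⟨q, hq, hqd⟩ := Nat.exists_prime_and_dvd hd1.ne'
  calc ordn b n ∣ r := hn
    _ = ordn b q := (hprime q hq (hqd.trans hd)).symm
    _ ∣ ordn b d := ordn_dvd_ordn_of_dvd hqd

theorem stmt6_general (k : ℕ) (p l : Fin k → ℕ) (hp : ∀ i, (p i).Prime) (hodd : ∀ i, Odd (p i))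
    (hinj : Function.Injective p)
    (hord : ∀ i j, ordn 2 (p i) = ordn 2 (p j))
    (hover : ∀ i, Overpsp 2 (p i ^ l i) ∨ l i = 1)
    (hcomp : ¬ (∏ i, p i ^ l i).Prime) (hgt : 1 < ∏ i, p i ^ l i) :
    Overpsp 2 (∏ i, p i ^ l i) := by
  obtain ⟨i₀⟩ : Nonempty (Fin k) := by
    cases k
    · simp at hgt
    · exact ⟨0⟩
  have hpow : ∀ i, ordn 2 (p i ^ l i) = ordn 2 (p i₀) := by
    intro i
    rcases hover i with hpsp | hl1
    · have hl0 : l i ≠ 0 := by rintro hl0; simpa [hl0] using hpsp.1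
      rw [← hpsp.2.2.2 (p i) (dvd_pow_self _ hl0) (hp i).one_lt]
      exact hord i i₀
    · rw [hl1, pow_one]
      exact hord i i₀
  refine overpsp_of_ordn_dvd_of_forall_prime (r := ordn 2 (p i₀)) hgt hcomp ?_ ?_ ?_
  · exact Nat.Coprime.prod_right fun i _ => (Nat.coprime_two_left.mpr (hodd i)).pow_right _
  · exact ordn_prod_dvd (fun i j hij => ((Nat.coprime_primes (hp i) (hp j)).mpr
      (hinj.ne hij)).pow _ _) fun i => (hpow i).dvd
  · intro q hq hqn
    obtain ⟨i, -, hqi⟩ := (Prime.dvd_finsetProd_iff hq.prime _).mp hqn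
    rw [(Nat.prime_dvd_prime_iff_eq hq (hp i)).mp (hq.dvd_of_dvd_pow hqi)]
    exact hord i i₀

theorem stmt6 (k : ℕ) (p l : Fin k → ℕ) (hp : ∀ i, (p i).Prime) (hodd : ∀ i, Odd (p i))
    (hinj : Function.Injective p) (hl : ∀ i, 1 ≤ l i)
    (hord : ∀ i j, ordn 2 (p i) = ordn 2 (p j))
    (hover : ∀ i, Overpsp 2 (p i ^ l i) ∨ l i = 1)
    (hcomp : ¬ (∏ i, p i ^ l i).Prime) (hgt : 1 < ∏ i, p i ^ l i) :
    Overpsp 2 (∏ i, p i ^ l i) :=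
  stmt6_general k p l hp hodd hinj hord hover hcomp hgt
end

section
/- If n is an overpseudoprime to base b and n is not divisible by the square of any Wieferich prime to base b, then n is squarefree. -/
theorem stmt9 (b n : ℕ) (hb : 1 < b) (h : Overpsp b n)
    (hw : ∀ p : ℕ, p.Prime → p ^ 2 ∣ n → ¬ (b ^ (p - 1) ≡ 1 [MOD p ^ 2])) :
    Squarefree n := by
  obtain ⟨hn1, -, hcop, hord⟩ := h
  rw [Nat.squarefree_iff_prime_squarefree]
  rintro p hp hpn
  apply hw p hp (by simpa [sq] using hpn)
  have hpn' : p ^ 2 ∣ n := by simpa [sq] using hpn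
  have hpd : p ∣ n := dvd_trans (dvd_mul_right p p) hpn
  have h1 : ordn b p = ordn b n := hord p hpd hp.one_lt
  have h2 : ordn b (p ^ 2) = ordn b n :=
    hord _ hpn' (one_lt_pow₀ hp.one_lt (by norm_num))
  haveI := Fact.mk hp
  have hbp : (b : ZMod p) ≠ 0 := by
    rw [Ne, ZMod.natCast_eq_zero_iff]
    exact (hp.coprime_iff_not_dvd.mp (hcop.coprime_dvd_right hpd).symm)
  have hd : orderOf (b : ZMod p) ∣ p - 1 := by
    apply orderOf_dvd_of_pow_eq_one
    exact ZMod.pow_card_sub_one_eq_one hbp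
  have hd2 : ordn b (p ^ 2) ∣ p - 1 := by
    rw [h2, ← h1]; exact hd
  have : ((b : ZMod (p ^ 2))) ^ (p - 1) = 1 := orderOf_dvd_iff_pow_eq_one.mp hd2
  have := (ZMod.natCast_eq_natCast_iff (b ^ (p - 1)) 1 (p ^ 2)).mp (by push_cast; simpa)
  exact this
end

section
/- If n is an overpseudoprime to base b, then n is a strong pseudoprime to base b: writing n − 1 = 2^r · s with s odd, either b^s ≡ 1 (mod n) or b^{2^i s} ≡ −1 (mod n) for some 0 ≤ i < r. -/
/-!
Let `m` be the order of `b` modulo `n`. Every prime `p ∣ n` has `ord_p b = m ∣ p - 1`, so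
`n ≡ 1 [MOD m]` and `b ^ (n - 1) ≡ 1 (mod n)`. In the chain `b ^ s, b ^ (2 s), …, b ^ (2 ^ r s) = 1`
either the first term is `1`, or some `x = b ^ (2 ^ i s) ≠ 1` has `x ^ 2 = 1`. In the latter case
`x - 1` is a unit mod `n`: a divisor `d > 1` of `n` with `x ≡ 1 (mod d)` would give
`m = ord_d b ∣ 2 ^ i s`, i.e. `x = 1`. Hence `(x - 1)(x + 1) = 0` forces `x = -1`.
-/

theorem pow_eq_one_or_exists_pow_ne_one_sq_eq_one {M : Type*} [Monoid M] {y : M} {s : ℕ} :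
    ∀ {r : ℕ}, y ^ (2 ^ r * s) = 1 →
      y ^ s = 1 ∨ ∃ i < r, y ^ (2 ^ i * s) ≠ 1 ∧ (y ^ (2 ^ i * s)) ^ 2 = 1
  | 0, h => Or.inl (by simpa using h)
  | r + 1, h => by
    by_cases hr : y ^ (2 ^ r * s) = 1
    · rcases pow_eq_one_or_exists_pow_ne_one_sq_eq_one hr with h1 | ⟨i, hir, hi⟩
      · exact Or.inl h1
      · exact Or.inr ⟨i, by omega, hi⟩
    · refine Or.inr ⟨r, by omega, hr, ?_⟩
      rwa [← pow_mul, mul_right_comm, ← pow_succ]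

theorem eq_neg_one_of_sq_eq_one_of_isUnit_sub_one {R : Type*} [CommRing R] {x : R}
    (hsq : x ^ 2 = 1) (hu : IsUnit (x - 1)) : x = -1 := by
  have hprod : (x - 1) * (x + 1) = 0 := by linear_combination hsq
  exact eq_neg_of_add_eq_zero_left (hu.mul_right_eq_zero.mp hprod)

theorem ZMod.exists_dvd_val_of_not_isUnit {n : ℕ} [NeZero n] {x : ZMod n} (hx : ¬IsUnit x) :
    ∃ d, d ∣ n ∧ 1 < d ∧ d ∣ x.val := by
  refine ⟨x.val.gcd n, Nat.gcd_dvd_right _ _, ?_, Nat.gcd_dvd_left _ _⟩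
  have hpos : 0 < x.val.gcd n := Nat.gcd_pos_of_pos_right _ (NeZero.pos n)
  have hne : x.val.gcd n ≠ 1 := fun hcop =>
    hx (by simpa using (ZMod.isUnit_iff_coprime x.val n).mpr hcop)
  omega

theorem Nat.cast_eq_one_of_forall_prime_dvd {m n : ℕ} (hn : n ≠ 0)
    (h : ∀ p, p.Prime → p ∣ n → (p : ZMod m) = 1) : (n : ZMod m) = 1 := by
  rw [← Nat.prod_primeFactorsList hn, Nat.cast_list_prod]
  refine List.prod_eq_one fun x hx => ?_
  obtain ⟨p, hp, rfl⟩ := List.mem_map.mp hx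
  exact h p (Nat.prime_of_mem_primeFactorsList hp) (Nat.dvd_of_mem_primeFactorsList hp)

namespace Overpsp

variable {b n : ℕ}

theorem pow_eq_one_of_dvd (h : Overpsp b n) {d k : ℕ} (hd : d ∣ n) (hd1 : 1 < d)
    (hk : (b : ZMod d) ^ k = 1) : (b : ZMod n) ^ k = 1 := by
  rw [← orderOf_dvd_iff_pow_eq_one] at hk ⊢
  have hord : orderOf (b : ZMod d) = orderOf (b : ZMod n) := h.2.2.2 d hd hd1
  exact hord ▸ hk

theorem pow_sub_one_eq_one (h : Overpsp b n) : (b : ZMod n) ^ (n - 1) = 1 := by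
  obtain ⟨hn1, -, hcop, hord⟩ := h
  rw [← orderOf_dvd_iff_pow_eq_one, ← ZMod.natCast_eq_zero_iff, Nat.cast_sub hn1.le,
    Nat.cast_one, sub_eq_zero]
  refine Nat.cast_eq_one_of_forall_prime_dvd (by omega) fun p hp hpn => ?_
  have := Fact.mk hp
  have hb : (b : ZMod p) ≠ 0 := by
    rw [Ne, ZMod.natCast_eq_zero_iff]
    exact fun hpb => hp.one_lt.ne' (Nat.eq_one_of_dvd_one (hcop ▸ Nat.dvd_gcd hpb hpn))
  have hdvd : ordn b n ∣ p - 1 := hord p hpn hp.one_lt ▸ ZMod.orderOf_dvd_card_sub_one hb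
  rwa [← ZMod.natCast_eq_zero_iff, Nat.cast_sub hp.one_lt.le, Nat.cast_one, sub_eq_zero] at hdvd

theorem pow_eq_one_of_not_isUnit_pow_sub_one (h : Overpsp b n) {k : ℕ}
    (hk : ¬IsUnit ((b : ZMod n) ^ k - 1)) : (b : ZMod n) ^ k = 1 := by
  have : NeZero n := ⟨by have := h.1; omega⟩
  obtain ⟨d, hd, hd1, hdval⟩ := ZMod.exists_dvd_val_of_not_isUnit hk
  refine h.pow_eq_one_of_dvd hd hd1 ?_
  have hcast : ZMod.castHom hd (ZMod d) ((b : ZMod n) ^ k - 1) = 0 := by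
    rwa [ZMod.castHom_apply, ← ZMod.natCast_val, ZMod.natCast_eq_zero_iff]
  rwa [map_sub, map_pow, map_natCast, map_one, sub_eq_zero] at hcast

end Overpsp

theorem stmt10_general (b n r s : ℕ) (h : Overpsp b n) (hrs : n - 1 = 2 ^ r * s) :
    (b : ZMod n) ^ s = 1 ∨ ∃ i < r, (b : ZMod n) ^ (2 ^ i * s) = -1 := by
  rcases pow_eq_one_or_exists_pow_ne_one_sq_eq_one (hrs ▸ h.pow_sub_one_eq_one)
    with h1 | ⟨i, hir, hne, hsq⟩
  · exact Or.inl h1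
  · refine Or.inr ⟨i, hir, eq_neg_one_of_sq_eq_one_of_isUnit_sub_one hsq ?_⟩
    by_contra hu
    exact hne (h.pow_eq_one_of_not_isUnit_pow_sub_one hu)

theorem stmt10 (b n r s : ℕ) (hb : 1 < b) (hodd : Odd n) (h : Overpsp b n)
    (hs : Odd s) (hrs : n - 1 = 2 ^ r * s) :
    (b : ZMod n) ^ s = 1 ∨ ∃ i < r, (b : ZMod n) ^ (2 ^ i * s) = -1 :=
  stmt10_general b n r s h hrs
end

section
/- If n is an overpseudoprime to base b, then for every two divisors d₁ < d₂ of n (including 1 and n), ord_n(b) divides d₂ − d₁. -/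
lemma ordn_dvd_sub_one_of_prime (b p : ℕ) (hp : p.Prime) (hcop : Nat.Coprime b p) :
    ordn b p ∣ p - 1 := by
  haveI : Fact p.Prime := ⟨hp⟩
  have hu : ((ZMod.unitOfCoprime b hcop : (ZMod p)ˣ) : ZMod p) = (b : ZMod p) := rfl
  have : orderOf (ZMod.unitOfCoprime b hcop : (ZMod p)ˣ) ∣ Fintype.card (ZMod p)ˣ :=
    orderOf_dvd_card
  rw [ZMod.card_units_eq_totient, Nat.totient_prime hp] at this
  rwa [ordn, ← hu, orderOf_units]

theorem stmt11 (b n : ℕ) (h : Overpsp b n) :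
    ∀ d₁ d₂, d₁ ∣ n → d₂ ∣ n → d₁ < d₂ → ordn b n ∣ d₂ - d₁ := by
  obtain ⟨hn1, -, hcop, hord⟩ := h
  have hn0 : 0 < n := by omega
  -- every divisor of n is ≡ 1 mod ordn b n
  have key : ∀ d, d ∣ n → d % (ordn b n) = 1 % (ordn b n) := by
    intro d
    induction d using Nat.strong_induction_on with
    | _ d ih =>
      intro hd
      have hd0 : d ≠ 0 := by rintro rfl; exact absurd (Nat.eq_zero_of_zero_dvd hd) (by omega)
      rcases eq_or_lt_of_le (Nat.one_le_iff_ne_zero.mpr hd0) with h1 | h1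
      · rw [← h1]
      · obtain ⟨p, hp, hpd⟩ := Nat.exists_prime_and_dvd (by omega : d ≠ 1)
        have hpn : p ∣ n := hpd.trans hd
        have hcp : Nat.Coprime b p := Nat.Coprime.coprime_dvd_right hpn hcop
        have h1p : ordn b n ∣ p - 1 := by
          rw [← hord p hpn hp.one_lt]
          exact ordn_dvd_sub_one_of_prime b p hp hcp
        have hdp : d / p ∣ n := (Nat.div_dvd_of_dvd hpd).trans hd
        have hdplt : d / p < d := Nat.div_lt_self (by omega) hp.one_lt
        have hq := ih (d / p) hdplt hdp
        have hdeq : d = p * (d / p) := (Nat.mul_div_cancel' hpd).symm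
        have hp1 : p % (ordn b n) = 1 % (ordn b n) := by
          have hp0 : 1 ≤ p := hp.one_lt.le
          have := (Nat.modEq_iff_dvd' hp0).mpr h1p
          exact this.symm
        calc d % (ordn b n) = (p * (d / p)) % (ordn b n) := by rw [← hdeq]
          _ = (1 * 1) % (ordn b n) := Nat.ModEq.mul hp1 hq
          _ = 1 % (ordn b n) := by rw [one_mul]
  intro d₁ d₂ h1 h2 hlt
  have e1 := key d₁ h1
  have e2 := key d₂ h2
  have : d₂ ≡ d₁ [MOD ordn b n] := e2.trans e1.symm
  exact (Nat.modEq_iff_dvd' hlt.le).mp this.symm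
end

section
/- Let N > 2, b > 1, and set P_N(b) = Φ_N(b) / gcd(N, Φ_N(b)). If P_N(b) is composite, then P_N(b) is an overpseudoprime to base b. -/
open Polynomial Finset

lemma phiN_cast (b N : ℕ) (hN : 2 < N) : (PhiN N b : ℤ) = (cyclotomic N ℤ).eval (b:ℤ) :=
  Int.toNat_of_nonneg (cyclotomic_pos hN _).le

lemma phiN_dvd_pow_sub_one (b N : ℕ) (hb : 1 < b) (hN : 2 < N) : PhiN N b ∣ b ^ N - 1 := by
  have h1 : (1:ℕ) ≤ b ^ N := Nat.one_le_pow _ _ (by omega)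
  have h : (PhiN N b : ℤ) ∣ ((b:ℤ))^N - 1 := by
    rw [phiN_cast b N hN]
    have := map_dvd (evalRingHom (b:ℤ)) (cyclotomic.dvd_X_pow_sub_one N ℤ)
    simpa using this
  have : (PhiN N b : ℤ) ∣ ((b ^ N - 1 : ℕ) : ℤ) := by
    rwa [Nat.cast_sub h1, Nat.cast_pow, Nat.cast_one]
  exact_mod_cast this

lemma phiN_dvd_geom (b N r : ℕ) (hb : 1 < b) (hN : 2 < N) (hr : r.Prime) (hrN : r ∣ N) :
    PhiN N b ∣ ∑ i ∈ range r, (b ^ (N / r)) ^ i := by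
  set m := N / r with hm
  have hmr : m * r = N := Nat.div_mul_cancel hrN
  have hm1 : 1 ≤ m := Nat.div_pos (Nat.le_of_dvd (by omega) hrN) hr.pos
  have hmem : m ∈ N.properDivisors := by
    rw [Nat.mem_properDivisors]
    constructor
    · exact Nat.div_dvd_of_dvd hrN
    · have : 1 < r := hr.one_lt
      have : m * 1 < m * r := Nat.mul_lt_mul_of_le_of_lt (le_refl m) this (by omega)
      omega
  have hpoly := X_pow_sub_one_mul_cyclotomic_dvd_X_pow_sub_one_of_dvd ℤ hmem
  have heval : ((b:ℤ)^m - 1) * (PhiN N b : ℤ) ∣ (b:ℤ)^N - 1 := by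
    rw [phiN_cast b N hN]
    have := map_dvd (evalRingHom (b:ℤ)) hpoly
    simpa using this
  have hgeom : (b:ℤ)^N - 1 = ((b:ℤ)^m - 1) * ∑ i ∈ range r, ((b:ℤ)^m) ^ i := by
    rw [mul_comm, geom_sum_mul, ← pow_mul, hmr]
  rw [hgeom] at heval
  have hne : (b:ℤ)^m - 1 ≠ 0 := by
    have : (1:ℤ) < (b:ℤ)^m := by
      have : (1:ℤ) < (b:ℤ) := by exact_mod_cast hb
      exact one_lt_pow₀ this (by omega)
    omega
  have hdvd : (PhiN N b : ℤ) ∣ ∑ i ∈ range r, ((b:ℤ)^m) ^ i :=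
    (mul_dvd_mul_iff_left hne).mp heval
  have : (PhiN N b : ℤ) ∣ ((∑ i ∈ range r, (b ^ m) ^ i : ℕ) : ℤ) := by push_cast; exact hdvd
  exact_mod_cast this

lemma order_eq_of_not_dvd (b N q : ℕ) (hb : 1 < b) (hN : 2 < N) (hq : q.Prime)
    (hqN : ¬ q ∣ N) (hdvd : q ∣ PhiN N b) : orderOf (b : ZMod q) = N := by
  haveI : Fact q.Prime := ⟨hq⟩
  haveI : NeZero ((N : ZMod q)) := ⟨by
    rw [Ne, ZMod.natCast_eq_zero_iff]; exact hqN⟩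
  have hz : ((PhiN N b : ℕ) : ZMod q) = 0 := (ZMod.natCast_eq_zero_iff _ _).mpr hdvd
  have hroot : IsRoot (cyclotomic N (ZMod q)) (b : ZMod q) := by
    have key : eval ((b:ℤ) : ZMod q) (cyclotomic N (ZMod q)) =
        (Int.castRingHom (ZMod q)) ((cyclotomic N ℤ).eval (b:ℤ)) := by
      rw [← map_cyclotomic N (Int.castRingHom (ZMod q)), eval_map]
      exact eval₂_at_apply (Int.castRingHom (ZMod q)) (b:ℤ)
    have : eval ((b:ℤ) : ZMod q) (cyclotomic N (ZMod q)) = 0 := by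
      rw [key]
      have : ((cyclotomic N ℤ).eval (b:ℤ)) = (PhiN N b : ℤ) := (phiN_cast b N hN).symm
      rw [this]
      simpa using hz
    simpa using this
  have := (isRoot_cyclotomic_iff).mp hroot
  exact this.eq_orderOf.symm

lemma one_add_pow_sub (x : ℤ) : ∀ n : ℕ, x^2 ∣ (1+x)^n - (1 + n*x) := by
  intro n
  induction n with
  | zero => simp
  | succ n ih =>
    obtain ⟨c, hc⟩ := ih
    refine ⟨(1+x)*c + n, ?_⟩
    push_cast
    linear_combination (1+x) * hc

lemma not_sq_dvd (b N q : ℕ) (hb : 1 < b) (hN : 2 < N) (hq : q.Prime) (hqN : q ∣ N)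
    (hdvd : q ∣ PhiN N b) : ¬ q^2 ∣ PhiN N b := by
  intro hsq
  haveI : Fact q.Prime := ⟨hq⟩
  set m := N / q with hm
  have hmq : m * q = N := Nat.div_mul_cancel hqN
  have hm1 : 1 ≤ m := Nat.div_pos (Nat.le_of_dvd (by omega) hqN) hq.pos
  set c := b ^ m with hcdef
  have hc1 : 1 < c := one_lt_pow₀ hb (by omega)
  have hS : PhiN N b ∣ ∑ i ∈ range q, c ^ i := phiN_dvd_geom b N q hb hN hq hqN
  have hqbN : q ∣ b ^ N - 1 := hdvd.trans (phiN_dvd_pow_sub_one b N hb hN)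
  have h1b : (1:ℕ) ≤ b ^ N := Nat.one_le_pow _ _ (by omega)
  have hbN1 : ((b:ZMod q)) ^ N = 1 := by
    have h0 := (ZMod.natCast_eq_zero_iff _ q).mpr hqbN
    rw [Nat.cast_sub h1b] at h0
    push_cast at h0
    exact sub_eq_zero.mp h0
  have hcz : (c : ZMod q) = 1 := by
    have h2 : ((c:ZMod q)) ^ q = 1 := by
      rw [hcdef]
      push_cast
      rw [← pow_mul, hmq, hbN1]
    have h3 : (c : ZMod q) ^ q = (c : ZMod q) := ZMod.pow_card _
    rw [h3] at h2
    exact h2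
  have hqc1 : q ∣ c - 1 := by
    have : ((c - 1 : ℕ) : ZMod q) = 0 := by
      rw [Nat.cast_sub hc1.le, hcz]
      simp
    exact (ZMod.natCast_eq_zero_iff _ q).mp this
  obtain ⟨t, ht⟩ := hqc1
  have hcZ : (c:ℤ) = 1 + (q:ℤ) * (t:ℤ) := by
    have := congrArg (Nat.cast : ℕ → ℤ) ht
    rw [Nat.cast_sub hc1.le] at this
    push_cast at this ⊢
    omega
  by_cases hq2 : q = 2
  · subst hq2
    have hbodd : b % 2 = 1 := by
      rcases Nat.even_or_odd b with he | ho
      · exfalso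
        have h2b : 2 ∣ b ^ N := dvd_pow he.two_dvd (by omega)
        omega
      · exact Nat.odd_iff.mp ho
    rcases Nat.even_or_odd m with he | ho
    · -- m even : c ≡ 1 mod 4
      obtain ⟨k, hk⟩ := he
      set a := b ^ k with ha
      have haodd : a % 2 = 1 := by
        rw [ha, Nat.pow_mod, hbodd, one_pow]
        rfl
      obtain ⟨j, hj⟩ : ∃ j, a = 2*j+1 := ⟨a/2, by omega⟩
      have hca : c = a * a := by rw [hcdef, hk, pow_add]
      have haa : a * a = 4*(j*j+j)+1 := by rw [hj]; ring
      have h4c : 4 ∣ c - 1 := by omega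
      have hS2 : (2:ℕ)^2 ∣ 1 + c := by
        have h4S := hsq.trans hS
        have : ∑ i ∈ range 2, c ^ i = 1 + c := by
          rw [Finset.sum_range_succ, Finset.sum_range_one]
          ring
        rwa [this] at h4S
      have : (4:ℕ) ∣ 1 + c := by norm_num at hS2 ⊢; exact hS2
      omega
    · -- m odd : contradiction already from 2 ∣ PhiN
      have hm3 : 3 ≤ m := by
        have : m ≠ 2 := by
          intro h2
          exact absurd (h2 ▸ ho) (by norm_num)
        omega
      set r := m.minFac with hr
      have hrp : r.Prime := Nat.minFac_prime (by omega)
      have hrm : r ∣ m := Nat.minFac_dvd m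
      have hrN : r ∣ N := hrm.trans ⟨2, hmq.symm⟩
      have hro : r % 2 = 1 := by
        rcases Nat.even_or_odd r with hre | hro
        · exfalso
          have : 2 ∣ m := hre.two_dvd.trans hrm
          have := Nat.odd_iff.mp ho
          omega
        · exact Nat.odd_iff.mp hro
      have hSr := phiN_dvd_geom b N r hb hN hrp hrN
      have h2Sr : 2 ∣ ∑ i ∈ range r, (b ^ (N / r)) ^ i := hdvd.trans hSr
      have h0 := (ZMod.natCast_eq_zero_iff _ 2).mpr h2Sr
      push_cast at h0
      have hb2 : (b : ZMod 2) = 1 := by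
        have h : ((b % 2 : ℕ) : ZMod 2) = (b : ZMod 2) := ZMod.natCast_mod b 2
        rw [hbodd] at h
        simpa using h.symm
      rw [hb2] at h0
      simp at h0
      -- h0 : (r : ZMod 2) = 0
      have : (2:ℕ) ∣ r := by
        have := (ZMod.natCast_eq_zero_iff r 2).mp (by simpa using h0)
        exact this
      omega
  · -- q odd
    have hqodd : q % 2 = 1 := Nat.odd_iff.mp (hq.odd_of_ne_two hq2)
    set x : ℤ := (q:ℤ) * (t:ℤ) with hx
    have h2 : x^2 ∣ ∑ i ∈ range q, ((1+x)^i - (1+(i:ℤ)*x)) :=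
      Finset.dvd_sum fun i _ => one_add_pow_sub x i
    have hx2 : (q:ℤ)^2 ∣ x^2 := pow_dvd_pow_of_dvd (⟨t, rfl⟩ : (q:ℤ) ∣ x) 2
    have hsumi : (q:ℕ) ∣ ∑ i ∈ range q, i := by
      have hgauss := Finset.sum_range_id_mul_two q
      have hcop : Nat.Coprime q 2 := (Nat.coprime_primes hq Nat.prime_two).mpr hq2
      refine hcop.dvd_of_dvd_mul_right ?_
      rw [hgauss]
      exact Dvd.intro _ rfl
    have hpart2 : (q:ℤ)^2 ∣ (∑ i ∈ range q, (i:ℤ)) * x := by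
      obtain ⟨u, hu⟩ := hsumi
      have : (∑ i ∈ range q, (i:ℤ)) = (q:ℤ) * u := by
        rw [← Nat.cast_sum, hu]
        push_cast
        ring
      rw [this, hx]
      ring_nf
      exact ⟨u * t, by ring⟩
    have hsplit : (∑ i ∈ range q, (c:ℤ)^i) - q =
        (∑ i ∈ range q, ((1+x)^i - (1+(i:ℤ)*x))) + (∑ i ∈ range q, (i:ℤ)) * x := by
      rw [Finset.sum_sub_distrib, Finset.sum_add_distrib, Finset.sum_const, Finset.card_range,
        Finset.sum_mul]
      have : ∀ i ∈ range q, (c:ℤ)^i = (1+x)^i := fun i _ => by rw [hcZ, hx]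
      rw [Finset.sum_congr rfl this]
      push_cast
      ring
    have hq2S : (q:ℤ)^2 ∣ (∑ i ∈ range q, (c:ℤ)^i) := by
      have := hsq.trans hS
      have h := Int.natCast_dvd_natCast.mpr this
      push_cast at h
      exact h
    have hq2q : (q:ℤ)^2 ∣ (q:ℤ) := by
      have hdiff : (q:ℤ)^2 ∣ (∑ i ∈ range q, (c:ℤ)^i) - q := by
        rw [hsplit]
        exact dvd_add (hx2.trans h2) hpart2
      have := dvd_sub hq2S hdiff
      simpa using this
    have : (q:ℕ)^2 ∣ q := by exact_mod_cast hq2q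
    have := Nat.le_of_dvd hq.pos this
    have := hq.two_le
    nlinarith

theorem stmt13 (b N : ℕ) (hb : 1 < b) (hN : 2 < N)
    (hc : 1 < PhiN N b / Nat.gcd N (PhiN N b))
    (hnp : ¬ (PhiN N b / Nat.gcd N (PhiN N b)).Prime) :
    Overpsp b (PhiN N b / Nat.gcd N (PhiN N b)) := by
  set M := PhiN N b with hM
  set g := Nat.gcd N M with hg
  set P := M / g with hP
  have hgM : g ∣ M := Nat.gcd_dvd_right N M
  have hPM : P ∣ M := Nat.div_dvd_of_dvd hgM
  have hMdvd : M ∣ b ^ N - 1 := phiN_dvd_pow_sub_one b N hb hN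
  have h1b : (1:ℕ) ≤ b ^ N := Nat.one_le_pow _ _ (by omega)
  have hPpow : P ∣ b ^ N - 1 := hPM.trans hMdvd
  have hpow : ∀ d : ℕ, d ∣ P → (b : ZMod d) ^ N = 1 := by
    intro d hd
    haveI : NeZero d := ⟨by
      rintro rfl
      have := Nat.eq_zero_of_zero_dvd hd
      omega⟩
    have hdvd : d ∣ b ^ N - 1 := hd.trans hPpow
    have h0 := (ZMod.natCast_eq_zero_iff _ d).mpr hdvd
    rw [Nat.cast_sub h1b] at h0
    push_cast at h0
    exact sub_eq_zero.mp h0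
  have key : ∀ q : ℕ, q.Prime → q ∣ P → orderOf (b : ZMod q) = N := by
    intro q hq hqP
    have hqM : q ∣ M := hqP.trans hPM
    by_cases hqN : q ∣ N
    · exfalso
      have hqg : q ∣ g := Nat.dvd_gcd hqN hqM
      have hsq : q^2 ∣ M := by
        have h := mul_dvd_mul hqP hqg
        rwa [Nat.div_mul_cancel hgM, ← pow_two] at h
      exact not_sq_dvd b N q hb hN hq hqN hqM hsq
    · exact order_eq_of_not_dvd b N q hb hN hq hqN hqM
  have ordeq : ∀ d : ℕ, d ∣ P → 1 < d → orderOf (b : ZMod d) = N := by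
    intro d hd hd1
    have hordN : orderOf (b : ZMod d) ∣ N := orderOf_dvd_of_pow_eq_one (hpow d hd)
    have hqp : d.minFac.Prime := Nat.minFac_prime (by omega)
    have hqd : d.minFac ∣ d := Nat.minFac_dvd d
    have hqP : d.minFac ∣ P := hqd.trans hd
    have hN' : N = orderOf (b : ZMod d.minFac) := (key d.minFac hqp hqP).symm
    have himg : ((ZMod.castHom hqd (ZMod d.minFac)) (b : ZMod d)) = (b : ZMod d.minFac) :=
      map_natCast _ b
    have hmap : orderOf (b : ZMod d.minFac) ∣ orderOf (b : ZMod d) := by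
      rw [← himg]
      exact orderOf_map_dvd ((ZMod.castHom hqd (ZMod d.minFac)) : ZMod d →* ZMod d.minFac)
        (b : ZMod d)
    exact Nat.dvd_antisymm hordN (hN' ▸ hmap)
  refine ⟨hc, hnp, ?_, ?_⟩
  · have h1 : Nat.gcd b P ∣ b ^ N := dvd_pow (Nat.gcd_dvd_left b P) (by omega)
    have h2 : Nat.gcd b P ∣ b ^ N - 1 := (Nat.gcd_dvd_right b P).trans hPpow
    have h3 : Nat.gcd b P ∣ 1 := by
      have h := Nat.dvd_sub h1 h2
      rwa [Nat.sub_sub_self h1b] at h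
    exact Nat.eq_one_of_dvd_one h3
  · intro d hd hd1
    show orderOf (b : ZMod d) = orderOf (b : ZMod P)
    rw [ordeq d hd hd1, ordeq P dvd_rfl hc]
end

section
/- For n ≥ 2 and b ≥ 2, a prime p divides Φ_n(b) if and only if gcd(b, p) = 1 and n = p^γ · ord_p(b) for some γ ≥ 0. Moreover, for n ≥ 3 a prime divisor p of Φ_n(b) satisfies: if γ = 0 then n = ord_p(b), and if γ > 0 then ν_p(Φ_n(b)) = 1. -/
open Polynomial Finset

section PhiN

variable {N b : ℕ}

lemma natCast_PhiN (hb : 1 ≤ b) : (PhiN N b : ℤ) = (cyclotomic N ℤ).eval (b : ℤ) :=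
  Int.toNat_of_nonneg (cyclotomic_nonneg N (by exact_mod_cast hb))

lemma PhiN_pos (hb : 1 < b) : 0 < PhiN N b := by
  have := cyclotomic_pos' (R := ℤ) N (x := b) (by exact_mod_cast hb)
  rw [← natCast_PhiN hb.le] at this
  exact_mod_cast this

lemma dvd_PhiN_iff_isRoot {p : ℕ} (hb : 1 ≤ b) :
    p ∣ PhiN N b ↔ (cyclotomic N (ZMod p)).IsRoot (b : ZMod p) := by
  rw [← Int.natCast_dvd_natCast, natCast_PhiN hb, ← ZMod.intCast_zmod_eq_zero_iff_dvd, IsRoot.def,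
    ← map_cyclotomic N (Int.castRingHom (ZMod p)), ← Int.cast_natCast (R := ZMod p) b, eval_intCast_map]
  rfl

end PhiN

section ordn

variable {b p : ℕ}

lemma ordn_dvd_sub_one (hp : p.Prime) (hco : b.Coprime p) : ordn b p ∣ p - 1 := by
  have := Fact.mk hp
  refine ZMod.orderOf_dvd_card_sub_one ?_
  rw [Ne, ZMod.natCast_eq_zero_iff]
  exact (Nat.Prime.coprime_iff_not_dvd hp).mp hco.symm

lemma ordn_pos_s14 (hp : p.Prime) (hco : b.Coprime p) : 0 < ordn b p :=
  Nat.pos_of_dvd_of_pos (ordn_dvd_sub_one hp hco) (Nat.sub_pos_of_lt hp.one_lt)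

lemma not_dvd_ordn (hp : p.Prime) (hco : b.Coprime p) : ¬ p ∣ ordn b p := fun h =>
  (Nat.le_of_dvd (ordn_pos_s14 hp hco) h).not_gt <|
    (Nat.le_of_dvd (Nat.sub_pos_of_lt hp.one_lt) (ordn_dvd_sub_one hp hco)).trans_lt
      (Nat.sub_lt hp.pos one_pos)

lemma dvd_pow_mul_ordn_sub_one (b p k : ℕ) : (p : ℤ) ∣ (b : ℤ) ^ (k * ordn b p) - 1 := by
  rw [← ZMod.intCast_zmod_eq_zero_iff_dvd]
  push_cast
  rw [mul_comm, pow_mul, ordn, pow_orderOf_eq_one, one_pow, sub_self]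

lemma sq_dvd_pow_ordn_sub_one (b p : ℕ) {γ : ℕ} (hγ : γ ≠ 0) :
    (p : ℤ) ^ 2 ∣ (b : ℤ) ^ (p ^ γ * ordn b p) - 1 := by
  have := dvd_sub_pow_of_dvd_sub (by simpa using dvd_pow_mul_ordn_sub_one b p 1) γ
  rw [one_pow, ← pow_mul, mul_comm] at this
  exact (pow_dvd_pow _ (by omega)).trans this

end ordn

theorem prime_dvd_PhiN_iff {n b p : ℕ} (hb : 1 ≤ b) (hp : p.Prime) :
    p ∣ PhiN n b ↔ b.Coprime p ∧ ∃ γ, n = p ^ γ * ordn b p := by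
  have := Fact.mk hp
  rw [dvd_PhiN_iff_isRoot hb]
  constructor
  · intro h
    have hn : n ≠ 0 := by rintro rfl; simp at h
    have : NeZero ((ordCompl[p] n : ℕ) : ZMod p) :=
      ⟨by rw [Ne, ZMod.natCast_eq_zero_iff]; exact Nat.not_dvd_ordCompl hp hn⟩
    rw [← Nat.ordProj_mul_ordCompl_eq_self n p, isRoot_cyclotomic_prime_pow_mul_iff_of_charP] at h
    refine ⟨(ZMod.isUnit_iff_coprime b p).mp (IsUnit.of_pow_eq_one h.pow_eq_one ?_), _,
      (Nat.ordProj_mul_ordCompl_eq_self n p).symm.trans (by rw [ordn, ← h.eq_orderOf])⟩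
    exact (Nat.ordCompl_pos p hn).ne'
  · rintro ⟨hco, γ, rfl⟩
    have : NeZero ((ordn b p : ℕ) : ZMod p) :=
      ⟨by rw [Ne, ZMod.natCast_eq_zero_iff]; exact not_dvd_ordn hp hco⟩
    rw [isRoot_cyclotomic_prime_pow_mul_iff_of_charP]
    exact IsPrimitiveRoot.orderOf _

lemma cyclotomic_mul_dvd_geom_sum (R : Type*) [CommRing R] [IsDomain R] {k N : ℕ} (hk : 1 < k)
    (hN : 0 < N) : cyclotomic (k * N) R ∣ ∑ i ∈ range k, (X ^ N) ^ i := by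
  refine (mul_dvd_mul_iff_left (X_pow_sub_C_ne_zero hN (1 : R))).1 ?_
  rw [C_1, mul_geom_sum, ← pow_mul, mul_comm N]
  refine X_pow_sub_one_mul_cyclotomic_dvd_X_pow_sub_one_of_dvd R ?_
  exact Nat.mem_properDivisors.2 ⟨dvd_mul_left _ _, by nlinarith⟩

lemma not_sq_dvd_geom_sum {p : ℕ} (hp : p.Prime) {c : ℤ} (hc : (p : ℤ) ∣ c - 1)
    (h4 : p = 2 → 4 ∣ c - 1) : ¬ (p : ℤ) ^ 2 ∣ ∑ i ∈ range p, c ^ i := by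
  rcases hp.eq_two_or_odd' with rfl | hodd
  · have := h4 rfl
    simp only [sum_range_succ, range_one, sum_singleton, pow_zero, pow_one]
    omega
  · have hpc : ¬ (p : ℤ) ∣ c := fun h =>
      hp.not_dvd_one (Int.natCast_dvd_natCast.1 (by simpa using dvd_sub h hc))
    have := emultiplicity_geom_sum₂_eq_one (Nat.prime_iff_prime_int.mp hp) hodd
      (by simpa using hc) hpc (y := 1)
    simp only [one_pow, mul_one] at this
    rw [← Nat.cast_one, emultiplicity_eq_coe] at this
    exact this.2

lemma padicValNat_PhiN_mul_eq_one {N b p : ℕ} (hb : 1 < b) (hp : p.Prime) (hN : 0 < N)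
    (hdvd : p ∣ PhiN (p * N) b) (hc : (p : ℤ) ∣ (b : ℤ) ^ N - 1)
    (h4 : p = 2 → 4 ∣ (b : ℤ) ^ N - 1) : padicValNat p (PhiN (p * N) b) = 1 := by
  have := Fact.mk hp
  have hPhi : (PhiN (p * N) b : ℤ) ∣ ∑ i ∈ range p, ((b : ℤ) ^ N) ^ i := by
    simpa [natCast_PhiN hb.le, eval_finsetSum] using
      eval_dvd (x := (b : ℤ)) (cyclotomic_mul_dvd_geom_sum ℤ hp.one_lt hN)
  have hsq : ¬ p ^ 2 ∣ PhiN (p * N) b := fun h =>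
    not_sq_dvd_geom_sum hp hc h4 ((Int.natCast_dvd_natCast.2 h).trans (by simpa using hPhi))
  have hne := (PhiN_pos hb (N := p * N)).ne'
  have hone := (padicValNat_dvd_iff_le (p := p) (n := 1) hne).1 (by rwa [pow_one])
  have htwo := (padicValNat_dvd_iff_le (p := p) hne).not.1 hsq
  omega

theorem stmt14_general (n b p : ℕ) (hb : 2 ≤ b) (hp : p.Prime) :
    (p ∣ PhiN n b ↔ Nat.Coprime b p ∧ ∃ γ : ℕ, n = p ^ γ * ordn b p) ∧
    (3 ≤ n → p ∣ PhiN n b → n = ordn b p ∨ padicValNat p (PhiN n b) = 1) := by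
  refine ⟨prime_dvd_PhiN_iff (by omega) hp, fun hn hdvd => ?_⟩
  obtain ⟨hco, γ, hγ⟩ := (prime_dvd_PhiN_iff (by omega) hp).1 hdvd
  cases γ with
  | zero => simp_all
  | succ γ =>
    right
    have h4 : p = 2 → (4 : ℤ) ∣ (b : ℤ) ^ (p ^ γ * ordn b p) - 1 := by
      rintro rfl
      have hm : ordn b 2 = 1 := Nat.dvd_one.1 (ordn_dvd_sub_one hp hco)
      -- `γ = 0` would give `n = 2`
      have hγ0 : γ ≠ 0 := by rintro rfl; simp_all
      simpa using sq_dvd_pow_ordn_sub_one b 2 hγ0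
    rw [hγ, pow_succ', mul_assoc] at hdvd ⊢
    refine padicValNat_PhiN_mul_eq_one (by omega) hp ?_ hdvd (dvd_pow_mul_ordn_sub_one ..) h4
    exact Nat.mul_pos (pow_pos hp.pos _) (ordn_pos_s14 hp hco)

theorem stmt14 (n b p : ℕ) (hn : 2 ≤ n) (hb : 2 ≤ b) (hp : p.Prime) :
    (p ∣ PhiN n b ↔ Nat.Coprime b p ∧ ∃ γ : ℕ, n = p ^ γ * ordn b p) ∧
    (3 ≤ n → p ∣ PhiN n b → n = ordn b p ∨ padicValNat p (PhiN n b) = 1) :=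
  stmt14_general n b p hb hp
end

section
/- For b even and n ≥ 1, the generalized Fermat number F_n(b) = b^{2^n} + 1 is primover to base b, i.e., it is either prime or an overpseudoprime to base b. -/
/-- Every divisor `d > 1` of `b^(2^n) + 1` (with `b` even) has `ord_d(b) = 2^(n+1)`. -/
lemma key_ord (b n d : ℕ) (heven : Even b)
    (hdvd : d ∣ b ^ 2 ^ n + 1) (hd1 : 1 < d) : ordn b d = 2 ^ (n + 1) := by
  have hNodd : Odd (b ^ 2 ^ n + 1) := by
    have : Even (b ^ 2 ^ n) := Nat.even_pow.mpr ⟨heven, by positivity⟩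
    exact this.add_one
  have hdodd : Odd d := hNodd.of_dvd_nat hdvd
  have hd2 : 2 < d := by
    have := Nat.odd_iff.mp hdodd
    omega
  haveI : Fact (2 < d) := ⟨hd2⟩
  haveI : NeZero d := ⟨by omega⟩
  have hcast : ((b : ZMod d)) ^ 2 ^ n = -1 := by
    have h0 : ((b ^ 2 ^ n + 1 : ℕ) : ZMod d) = 0 :=
      (ZMod.natCast_eq_zero_iff _ _).mpr hdvd
    push_cast at h0
    linear_combination h0
  haveI : Fact (Nat.Prime 2) := ⟨Nat.prime_two⟩
  have hne : ¬ ((b : ZMod d)) ^ 2 ^ n = 1 := by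
    rw [hcast]
    exact ZMod.neg_one_ne_one
  have hfin : ((b : ZMod d)) ^ 2 ^ (n + 1) = 1 := by
    rw [pow_succ, pow_mul, hcast]
    ring
  exact orderOf_eq_prime_pow hne hfin

theorem stmt16 (b n : ℕ) (hb : 1 < b) (heven : Even b) (hn : 1 ≤ n) :
    Primover b (b ^ 2 ^ n + 1) := by
  by_cases hp : (b ^ 2 ^ n + 1).Prime
  · exact Or.inl hp
  · refine Or.inr ⟨?_, hp, ?_, ?_⟩
    · have : 1 < b ^ 2 ^ n := one_lt_pow₀ hb (by positivity)
      omega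
    · have h : b ^ 2 ^ n + 1 = 1 + b * b ^ (2 ^ n - 1) := by
        rw [← pow_succ']
        have : 2 ^ n - 1 + 1 = 2 ^ n := by
          have := Nat.one_le_two_pow (n := n); omega
        rw [this]; ring
      rw [h]
      exact (Nat.coprime_add_mul_left_right b 1 _).mpr (Nat.coprime_one_right b)
    · intro d hdvd hd1
      have hN1 : 1 < b ^ 2 ^ n + 1 := by
        have : 1 < b ^ 2 ^ n := one_lt_pow₀ hb (by positivity)
        omega
      rw [key_ord b n d heven hdvd hd1, key_ord b n _ heven dvd_rfl hN1]
end

section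
/- Let p be a prime with gcd(p, b − 1) = 1. Then the generalized Mersenne number M_p(b) = (b^p − 1)/(b − 1) is primover to base b (prime or overpseudoprime to base b). -/
theorem stmt17 (b p : ℕ) (hb : 1 < b) (hp : p.Prime) (hg : Nat.gcd p (b - 1) = 1) :
    Primover b ((b ^ p - 1) / (b - 1)) := by
  have hb1 : 1 ≤ b := hb.le
  have hbp1 : 1 ≤ b ^ p := Nat.one_le_pow _ _ (by omega)
  have hM : (b - 1) * (∑ i ∈ Finset.range p, b ^ i) = b ^ p - 1 := by
    have h := geom_sum_mul (b : ℤ) p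
    zify [hb1, hbp1]
    push_cast at h ⊢
    linarith [h]
  set S := ∑ i ∈ Finset.range p, b ^ i with hS
  have hMeq : (b ^ p - 1) / (b - 1) = S := by
    rw [← hM, Nat.mul_div_cancel_left _ (by omega : 0 < b - 1)]
  rw [hMeq]
  have hp2 : 2 ≤ p := hp.two_le
  have hS2 : 1 + b ≤ S := by
    calc 1 + b = ∑ i ∈ Finset.range 2, b ^ i := by simp [Finset.sum_range_succ]
    _ ≤ S := Finset.sum_le_sum_of_subset (Finset.range_subset_range.mpr hp2)
  have hS1 : 1 < S := by omega
  have hSdvd : S ∣ b ^ p - 1 := ⟨b - 1, by rw [← hM]; ring⟩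
  have hpfact : Fact p.Prime := ⟨hp⟩
  have key : ∀ d, d ∣ S → 1 < d → ordn b d = p := by
    intro d hd hd1
    have hdvd : d ∣ b ^ p - 1 := hd.trans hSdvd
    have hmod : b ^ p ≡ 1 [MOD d] := ((Nat.modEq_iff_dvd' hbp1).mpr hdvd).symm
    have hpow : (b : ZMod d) ^ p = 1 := by
      have := (ZMod.natCast_eq_natCast_iff _ _ _).mpr hmod
      push_cast at this
      simpa using this
    have hne : (b : ZMod d) ≠ 1 := by
      intro h1
      have hmod1 : b ≡ 1 [MOD d] := by
        have : ((b : ℕ) : ZMod d) = ((1 : ℕ) : ZMod d) := by push_cast; simpa using h1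
        exact (ZMod.natCast_eq_natCast_iff _ _ _).mp this
      have hndb1 : d ∣ b - 1 := (Nat.modEq_iff_dvd' hb1).mp hmod1.symm
      have hdb1 : (d : ℤ) ∣ (b : ℤ) - 1 := by zify [hb1] at hndb1; exact hndb1
      -- d ∣ S - p in ℤ
      have hdSp : (d : ℤ) ∣ (S : ℤ) - p := by
        have : (S : ℤ) - p = ∑ i ∈ Finset.range p, ((b : ℤ) ^ i - 1) := by
          push_cast [hS]
          rw [Finset.sum_sub_distrib]
          simp
        rw [this]
        refine Finset.dvd_sum ?_
        intro i _
        exact hdb1.trans (by simpa using sub_dvd_pow_sub_pow (b : ℤ) 1 i)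
      have hdS : (d : ℤ) ∣ (S : ℤ) := Int.natCast_dvd_natCast.mpr hd
      have hdp : d ∣ p := by
        have : (d : ℤ) ∣ (p : ℤ) := by simpa using dvd_sub hdS hdSp
        exact_mod_cast this
      have hdep : d = p := ((Nat.Prime.eq_one_or_self_of_dvd hp d hdp).resolve_left (by omega))
      have hpb : p ∣ b - 1 := hdep ▸ hndb1
      have : p ∣ Nat.gcd p (b - 1) := Nat.dvd_gcd dvd_rfl hpb
      rw [hg] at this
      exact absurd (Nat.eq_one_of_dvd_one this) (by omega)
    exact orderOf_eq_prime hpow hne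
  have hcop : Nat.Coprime b S := by
    have h1 : Nat.gcd b S ∣ b ^ p := (Nat.gcd_dvd_left b S).trans (dvd_pow_self b (by omega))
    have h2 : Nat.gcd b S ∣ b ^ p - 1 := (Nat.gcd_dvd_right b S).trans hSdvd
    have : Nat.gcd b S ∣ 1 := by
      have := Nat.dvd_sub h1 h2
      simpa [Nat.sub_sub_self hbp1] using this
    exact Nat.eq_one_of_dvd_one this
  by_cases hSp : S.Prime
  · exact Or.inl hSp
  · refine Or.inr ⟨hS1, hSp, hcop, fun d hd hd1 => ?_⟩
    rw [key d hd hd1, key S dvd_rfl hS1]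
end

section
/- Suppose b is even and m ≥ 1. Then b^m + 1 is primover to base b if and only if m is a power of 2. -/
lemma pow_eq_neg_one' {b m d : ℕ} (hd : d ∣ b ^ m + 1) : (b : ZMod d) ^ m = -1 := by
  have h : ((b ^ m + 1 : ℕ) : ZMod d) = 0 := (ZMod.natCast_eq_zero_iff _ _).2 hd
  push_cast at h
  linear_combination h

lemma ord_eq' {b k d : ℕ} (hodd : Odd d) (hd : d ∣ b ^ 2 ^ k + 1) (hd1 : 1 < d) :
    orderOf (b : ZMod d) = 2 ^ (k + 1) := by
  have hd3 : 2 < d := by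
    rcases Nat.odd_iff.1 hodd with h; omega
  haveI : Fact (2 < d) := ⟨hd3⟩
  have hneg : (b : ZMod d) ^ 2 ^ k = -1 := pow_eq_neg_one' hd
  have h1 : (b : ZMod d) ^ 2 ^ (k + 1) = 1 := by
    rw [pow_succ, pow_mul, hneg]; ring
  have hdvd : orderOf (b : ZMod d) ∣ 2 ^ (k + 1) := orderOf_dvd_of_pow_eq_one h1
  obtain ⟨j, hj, hjeq⟩ := (Nat.dvd_prime_pow Nat.prime_two).1 hdvd
  have hjk : ¬ j ≤ k := by
    intro hjk
    have h2 : orderOf (b : ZMod d) ∣ 2 ^ k := hjeq ▸ pow_dvd_pow 2 hjk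
    have := orderOf_dvd_iff_pow_eq_one.mp h2
    rw [hneg] at this
    exact ZMod.neg_one_ne_one this
  have : j = k + 1 := by omega
  rw [hjeq, this]

theorem stmt18 (b m : ℕ) (hb : 1 < b) (heven : Even b) (hm : 1 ≤ m) :
    Primover b (b ^ m + 1) ↔ ∃ k : ℕ, m = 2 ^ k := by
  have hbm : 2 ≤ b ^ m := by
    calc 2 ≤ b := hb
    _ = b ^ 1 := (pow_one b).symm
    _ ≤ b ^ m := Nat.pow_le_pow_right (by omega) hm
  set n := b ^ m + 1 with hn
  have hn1 : 1 < n := by omega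
  have hnodd : Odd n := by
    have : Even (b ^ m) := Nat.even_pow.mpr ⟨heven, by omega⟩
    exact this.add_one
  constructor
  · -- Primover → m power of 2
    intro hP
    by_contra hne
    push_neg at hne
    -- m = s * o with s = 2^v, o odd, o > 1
    set v := m.factorization 2 with hv
    set s := 2 ^ v with hs
    set o := m / s with ho
    have hm0 : m ≠ 0 := by omega
    have hso : s * o = m := Nat.ordProj_mul_ordCompl_eq_self m 2
    have hoodd : Odd o := by
      rw [Nat.odd_iff, ← Nat.two_dvd_ne_zero]
      exact Nat.not_dvd_ordCompl Nat.prime_two hm0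
    have ho1 : 1 < o := by
      rcases Nat.lt_or_ge 1 o with h | h
      · exact h
      · exfalso
        rcases Nat.le_one_iff_eq_zero_or_eq_one.mp h with h0 | h1
        · rw [h0, mul_zero] at hso; omega
        · exact hne v (by rw [← hso, h1, mul_one])
    have ho3 : 3 ≤ o := by
      rcases Nat.odd_iff.1 hoodd with h; omega
    have hs1 : 1 ≤ s := Nat.one_le_two_pow
    have hsm : 2 * s < m := by nlinarith
    set d := b ^ s + 1 with hd
    have hbs : 2 ≤ b ^ s := by
      calc 2 ≤ b := hb
      _ = b ^ 1 := (pow_one b).symm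
      _ ≤ b ^ s := Nat.pow_le_pow_right (by omega) hs1
    have hd1 : 1 < d := by omega
    have hddvd : d ∣ n := by
      have h := (hoodd.nat_add_dvd_pow_add_pow (b ^ s) 1)
      rw [one_pow, ← pow_mul, hso] at h
      exact h
    have hdn : d < n := by
      have : b ^ s < b ^ m := Nat.pow_lt_pow_right hb (by omega)
      omega
    -- order of b mod n divides 2*s is impossible
    have hkey : ¬ (orderOf (b : ZMod n) ∣ 2 * s) := by
      intro hdvd
      have h1 : (b : ZMod n) ^ (2 * s) = 1 := orderOf_dvd_iff_pow_eq_one.mp hdvd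
      have h2 : ((b ^ (2 * s) : ℕ) : ZMod n) = ((1 : ℕ) : ZMod n) := by push_cast; rw [h1]
      have h3 : b ^ (2 * s) ≡ 1 [MOD n] := (ZMod.natCast_eq_natCast_iff _ _ _).1 h2
      have h4 : n ∣ b ^ (2 * s) - 1 := (Nat.modEq_iff_dvd' (Nat.one_le_pow _ _ (by omega))).1 h3.symm
      have h5 : b ^ (2 * s) < n := by
        have : b ^ (2 * s) < b ^ m := Nat.pow_lt_pow_right hb hsm
        omega
      have h6 : 2 ≤ b ^ (2 * s) := by
        calc 2 ≤ b := hb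
        _ = b ^ 1 := (pow_one b).symm
        _ ≤ b ^ (2 * s) := Nat.pow_le_pow_right (by omega) (by omega)
      have := Nat.le_of_dvd (by omega) h4
      omega
    rcases hP with hp | hops
    · exact absurd ((Nat.Prime.eq_one_or_self_of_dvd hp d hddvd)) (by omega)
    · obtain ⟨-, -, -, hall⟩ := hops
      have h := hall d hddvd hd1
      -- ordn b d ∣ 2 * s
      have hds : orderOf (b : ZMod d) ∣ 2 * s := by
        apply orderOf_dvd_of_pow_eq_one
        have := pow_eq_neg_one' (dvd_refl d)
        rw [mul_comm, pow_mul, this]; ring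
      rw [show ordn b d = orderOf (b : ZMod d) from rfl,
        show ordn b n = orderOf (b : ZMod n) from rfl] at h
      exact hkey (h ▸ hds)
  · -- m power of 2 → Primover
    rintro ⟨k, rfl⟩
    by_cases hp : n.Prime
    · exact Or.inl hp
    right
    refine ⟨hn1, hp, ?_, ?_⟩
    · -- coprime
      have hx : b * b ^ (2 ^ k - 1) = b ^ 2 ^ k := by
        rw [← pow_succ']
        congr 1
        have : 1 ≤ 2 ^ k := Nat.one_le_two_pow
        omega
      have hc : Nat.Coprime b (1 + b * b ^ (2 ^ k - 1)) := by
        rw [Nat.coprime_add_mul_left_right]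
        exact Nat.coprime_one_right b
      have hneq : n = 1 + b * b ^ (2 ^ k - 1) := by rw [hn, hx]; omega
      rw [hneq]
      exact hc
    · intro d hdn hd1
      have hdodd : Odd d := hnodd.of_dvd_nat hdn  -- ?
      show orderOf (b : ZMod d) = orderOf (b : ZMod n)
      rw [ord_eq' hdodd (hdn.trans (dvd_refl n)) hd1, ord_eq' hnodd (dvd_refl n) hn1]
end
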